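/- arXiv:1401.3456 — 2 statements merged into one kernel-verified Lean document; each statement's English description precedes it below -/
import Mathlib

section
/- Let σ > 0 and V ∈ ℝ. Then ∫_0^∞ ∫_{−∞}^{V − x/Δt} (v − V)·exp(−v²/(2σ²)) dv dx, divided by Δt·σ·√(2π), equals −(1/2)·[(σ² + V²)·erfc(−V/(σ√2)) + V·σ·√(2/π)·exp(−V²/(2σ²))]. -/
/-!
For `v < V` the inner integral sees `v` exactly when `0 < x < Δt (V - v)`, so exchanging the order
of integration turns the double integral into `-Δt ∫_{-∞}^V (v - V)² e^{-v²/2σ²} dv`. Since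
`((v - V)² - σ² - V²) e^{-v²/2σ²}` is the derivative of `-σ² (v - 2V) e^{-v²/2σ²}`, this is
`-Δt ((σ² + V²) ∫_{-∞}^V e^{-v²/2σ²} dv + σ² V e^{-V²/2σ²})`, and the substitution `v = -σ√2 s`
expresses the remaining Gaussian integral as `σ √(2π) / 2 · erfc (-V / (σ√2))`.
-/

open MeasureTheory Real

/-- The complementary error function `erfc(z) = (2/√π) ∫_z^∞ exp(-s²) ds`. -/
noncomputable def erfc (z : ℝ) : ℝ :=
  (2 / Real.sqrt Real.pi) * ∫ s in Set.Ioi z, Real.exp (-s ^ 2)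

open Set Filter Topology Polynomial

section RepeatedIntegral

variable {E : Type*} [NormedAddCommGroup E]

theorem indicator_add_lt_apply (φ : ℝ → E) (V x v : ℝ) :
    {p : ℝ × ℝ | p.1 + p.2 < V}.indicator (fun p => φ p.2) (x, v) =
      (Iio (V - v)).indicator (fun _ => φ v) x := by
  simp only [indicator, mem_ofPred_eq, mem_Iio, lt_sub_iff_add_lt]

variable [NormedSpace ℝ E] [CompleteSpace E]

theorem integral_Ioi_indicator_add_lt (φ : ℝ → E) (V v : ℝ) :
    ∫ x in Ioi 0, {p : ℝ × ℝ | p.1 + p.2 < V}.indicator (fun p => φ p.2) (x, v) =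
      (Iio V).indicator (fun v => (V - v) • φ v) v := by
  simp_rw [indicator_add_lt_apply]
  rw [integral_indicator measurableSet_Iio, Measure.restrict_restrict measurableSet_Iio,
    Iio_inter_Ioi, setIntegral_const, Real.volume_real_Ioo, sub_zero]
  by_cases h : v < V
  · simp [h, (sub_pos.2 h).le]
  · simp [h, sub_nonpos.2 (not_lt.1 h)]

theorem integral_Ioi_integral_Iio_sub {f : ℝ → E} {V : ℝ} (hf : AEStronglyMeasurable f)
    (hint : IntegrableOn (fun v => (V - v) • f v) (Iio V)) :
    ∫ x in Ioi 0, ∫ v in Iio (V - x), f v = ∫ v in Iio V, (V - v) • f v := by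
  set S : Set (ℝ × ℝ) := {p | p.1 + p.2 < V}
  have hS : MeasurableSet S := measurableSet_lt (by fun_prop) measurable_const
  set G : ℝ × ℝ → E := S.indicator fun p => f p.2
  have hG : Integrable G ((volume.restrict (Ioi 0)).prod volume) := by
    have hmeas : AEStronglyMeasurable G ((volume.restrict (Ioi 0)).prod volume) :=
      hf.comp_snd.indicator hS
    refine (integrable_prod_iff' hmeas).2 ⟨.of_forall fun v => ?_, ?_⟩
    · simp_rw [G, S, indicator_add_lt_apply]
      rw [integrable_indicator_iff measurableSet_Iio, IntegrableOn,
        Measure.restrict_restrict measurableSet_Iio, Iio_inter_Ioi]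
      exact integrableOn_const measure_Ioo_lt_top.ne
    · simp_rw [G, S, norm_indicator_eq_indicator_norm,
        integral_Ioi_indicator_add_lt (fun v => ‖f v‖)]
      refine (integrable_indicator_iff measurableSet_Iio).2
        (IntegrableOn.congr_fun hint.norm (fun v hv => ?_) measurableSet_Iio)
      rw [norm_smul, Real.norm_of_nonneg (sub_pos.2 hv).le, smul_eq_mul]
  calc ∫ x in Ioi 0, ∫ v in Iio (V - x), f v = ∫ x in Ioi 0, ∫ v, G (x, v) := by
        congr 1 with x
        rw [← integral_indicator measurableSet_Iio]
        congr 1 with v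
        simp only [G, S, indicator, mem_ofPred_eq, mem_Iio, lt_sub_iff_add_lt']
    _ = ∫ v, ∫ x in Ioi 0, G (x, v) := integral_integral_swap hG
    _ = ∫ v in Iio V, (V - v) • f v := by
        simp_rw [G, S, integral_Ioi_indicator_add_lt]
        exact integral_indicator measurableSet_Iio

theorem integral_Ioi_integral_Iio_sub_div {f : ℝ → E} {V c : ℝ} (hc : 0 < c)
    (hf : AEStronglyMeasurable f) (hint : IntegrableOn (fun v => (V - v) • f v) (Iio V)) :
    ∫ x in Ioi 0, ∫ v in Iio (V - x / c), f v = c • ∫ v in Iio V, (V - v) • f v := by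
  simp_rw [div_eq_inv_mul]
  rw [integral_comp_mul_left_Ioi (fun y => ∫ v in Iio (V - y), f v) 0 (inv_pos.2 hc), mul_zero,
    inv_inv, integral_Ioi_integral_Iio_sub hf hint]

end RepeatedIntegral

section Gaussian

variable {σ : ℝ}

theorem integrable_pow_mul_exp_neg_sq_div (hσ : σ ≠ 0) (n : ℕ) :
    Integrable fun v : ℝ => v ^ n * exp (-v ^ 2 / (2 * σ ^ 2)) := by
  have h := integrable_rpow_mul_exp_neg_mul_sq (b := (2 * σ ^ 2)⁻¹) (by positivity)
    (s := n) (by linarith [n.cast_nonneg (α := ℝ)])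
  simp_rw [rpow_natCast, neg_mul, ← div_eq_inv_mul, ← neg_div] at h
  exact h

theorem integrable_eval_mul_exp_neg_sq_div (hσ : σ ≠ 0) (p : ℝ[X]) :
    Integrable fun v : ℝ => p.eval v * exp (-v ^ 2 / (2 * σ ^ 2)) := by
  simp_rw [eval_eq_sum_range, Finset.sum_mul, mul_assoc]
  exact integrable_finsetSum _ fun i _ => (integrable_pow_mul_exp_neg_sq_div hσ i).const_mul _

theorem integral_Iic_sub_sq_mul_exp_neg_sq_div (hσ : σ ≠ 0) (V : ℝ) :
    ∫ v in Iic V, (v - V) ^ 2 * exp (-v ^ 2 / (2 * σ ^ 2)) =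
      (σ ^ 2 + V ^ 2) * (∫ v in Iic V, exp (-v ^ 2 / (2 * σ ^ 2))) +
        σ ^ 2 * V * exp (-V ^ 2 / (2 * σ ^ 2)) := by
  set g : ℝ → ℝ := fun v => exp (-v ^ 2 / (2 * σ ^ 2))
  have hpoly (p : ℝ[X]) : IntegrableOn (fun v => p.eval v * g v) (Iic V) :=
    (integrable_eval_mul_exp_neg_sq_div hσ p).integrableOn
  have hderiv (v : ℝ) : HasDerivAt (fun v => -σ ^ 2 * (v - 2 * V) * g v)
      (((v - V) ^ 2 - (σ ^ 2 + V ^ 2)) * g v) v := by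
    have hq : HasDerivAt (fun v => -v ^ 2 / (2 * σ ^ 2)) (-(↑2 * v ^ (2 - 1)) / (2 * σ ^ 2)) v :=
      (hasDerivAt_pow 2 v).neg.div_const _
    refine ((((hasDerivAt_id v).sub_const (2 * V)).const_mul (-σ ^ 2)).mul hq.exp).congr_deriv ?_
    simp only [g, id]
    field_simp
    ring
  have hderiv_int : IntegrableOn (fun v => ((v - V) ^ 2 - (σ ^ 2 + V ^ 2)) * g v) (Iic V) := by
    simpa only [eval_sub, eval_pow, eval_X, eval_C] using
      (hpoly ((X - C V) ^ 2 - C (σ ^ 2 + V ^ 2)) :)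
  have hlim : Tendsto (fun v => -σ ^ 2 * (v - 2 * V) * g v) atBot (𝓝 0) :=
    tendsto_zero_of_hasDerivAt_of_integrableOn_Iic (fun v _ => hderiv v) hderiv_int
      (by simpa only [eval_mul, eval_sub, eval_X, eval_C] using
        (hpoly (C (-σ ^ 2) * (X - C (2 * V))) :))
  have hftc : ∫ v in Iic V, ((v - V) ^ 2 - (σ ^ 2 + V ^ 2)) * g v =
      -σ ^ 2 * (V - 2 * V) * g V - 0 :=
    integral_Iic_of_hasDerivAt_of_tendsto' (fun v _ => hderiv v) hderiv_int hlim
  have hsplit : ∫ v in Iic V, (v - V) ^ 2 * g v =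
      (∫ v in Iic V, ((v - V) ^ 2 - (σ ^ 2 + V ^ 2)) * g v) +
        (σ ^ 2 + V ^ 2) * ∫ v in Iic V, g v := by
    have hconst : IntegrableOn (fun v => (σ ^ 2 + V ^ 2) * g v) (Iic V) := by
      simpa only [eval_C] using (hpoly (C (σ ^ 2 + V ^ 2)) :)
    rw [← integral_const_mul, ← integral_add hderiv_int hconst]
    congr 1 with v
    ring
  rw [hsplit, hftc]
  ring

theorem integral_Iic_exp_neg_sq_div_eq_erfc (hσ : 0 < σ) (V : ℝ) :
    ∫ v in Iic V, exp (-v ^ 2 / (2 * σ ^ 2)) = σ * √(2 * π) / 2 * erfc (-V / (σ * √2)) := by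
  have hk : 0 < σ * √2 := by positivity
  have hscale (s : ℝ) : exp (-(σ * √2 * s) ^ 2 / (2 * σ ^ 2)) = exp (-s ^ 2) := by
    rw [mul_pow, mul_pow, sq_sqrt zero_le_two]
    field_simp
  have hsub :=
    integral_comp_mul_left_Ioi (fun v => exp (-v ^ 2 / (2 * σ ^ 2))) (-V / (σ * √2)) hk
  simp only [hscale, mul_div_cancel₀ _ hk.ne', smul_eq_mul] at hsub
  have hneg : ∫ v in Iic V, exp (-v ^ 2 / (2 * σ ^ 2)) =
      ∫ v in Ioi (-V), exp (-v ^ 2 / (2 * σ ^ 2)) := by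
    rw [← neg_neg V, ← integral_comp_neg_Ioi, neg_neg]
    simp only [neg_sq]
  rw [hneg, erfc, hsub, sqrt_mul zero_le_two]
  field_simp

end Gaussian

theorem stmt_7 (σ V Δt : ℝ) (hσ : 0 < σ) (hΔt : 0 < Δt) :
    (∫ x in Set.Ioi (0 : ℝ), ∫ v in Set.Iio (V - x / Δt),
        (v - V) * Real.exp (-v ^ 2 / (2 * σ ^ 2))) / (Δt * σ * Real.sqrt (2 * Real.pi)) =
      -(1 / 2) * ((σ ^ 2 + V ^ 2) * erfc (-V / (σ * Real.sqrt 2)) +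
        V * σ * Real.sqrt (2 / Real.pi) * Real.exp (-V ^ 2 / (2 * σ ^ 2))) := by
  have hweight (v : ℝ) : (V - v) • ((v - V) * exp (-v ^ 2 / (2 * σ ^ 2))) =
      -((v - V) ^ 2 * exp (-v ^ 2 / (2 * σ ^ 2))) := by
    rw [smul_eq_mul]
    ring
  have hint : IntegrableOn (fun v => (v - V) ^ 2 * exp (-v ^ 2 / (2 * σ ^ 2))) (Iio V) := by
    simpa only [eval_pow, eval_sub, eval_X, eval_C] using
      ((integrable_eval_mul_exp_neg_sq_div hσ.ne' ((X - C V) ^ 2)).integrableOn :)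
  rw [integral_Ioi_integral_Iio_sub_div hΔt (by fun_prop)
    (hint.neg.congr_fun (fun v _ => (hweight v).symm) measurableSet_Iio)]
  simp_rw [hweight]
  rw [integral_neg, ← integral_Iic_eq_integral_Iio, integral_Iic_sub_sq_mul_exp_neg_sq_div hσ.ne',
    integral_Iic_exp_neg_sq_div_eq_erfc hσ]
  have hsqrt : √(2 * π) * √(2 / π) = 2 := by
    rw [← sqrt_mul (by positivity), show 2 * π * (2 / π) = 2 ^ 2 by field_simp,
      sqrt_sq zero_le_two]
  set E := exp (-V ^ 2 / (2 * σ ^ 2))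
  field_simp
  linear_combination σ ^ 2 * V * Δt * E * hsqrt
end

section
/- Let γ > 0, D > 0 and define α(V) = −(λ_μ/(μ+1))·[(σ_μ² + V²)·erfc(−V/(σ_μ√2)) + V·σ_μ·√(2/π)·exp(−V²/(2σ_μ²))] with λ_μ = (1/4)√(π(μ+1)γ/(2D)) and σ_μ = √((μ+1)Dγ). Then as μ → ∞, α(V) − α(−V) → −γV uniformly for V in compact sets. -/
open MeasureTheory Real Filter

/-- The drift coefficient `α(V)` from collisions on one side in the 1D MD model [A],
with `λ_μ = (1/4)√(π(μ+1)γ/(2D))` and `σ_μ = √((μ+1)Dγ)`. -/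
noncomputable def alpha (γ D μ V : ℝ) : ℝ :=
  -(((1 / 4) * Real.sqrt (Real.pi * (μ + 1) * γ / (2 * D))) / (μ + 1)) *
    ((Real.sqrt ((μ + 1) * D * γ) ^ 2 + V ^ 2) *
        erfc (-V / (Real.sqrt ((μ + 1) * D * γ) * Real.sqrt 2)) +
      V * Real.sqrt ((μ + 1) * D * γ) * Real.sqrt (2 / Real.pi) *
        Real.exp (-V ^ 2 / (2 * Real.sqrt ((μ + 1) * D * γ) ^ 2)))

/-!
Put `T = σ_μ √2`, so that `λ_μ / (μ + 1) = γ √π / (4 T)`. Since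
`erfc (-x) - erfc x = (4 / √π) ∫₀ˣ e^{-s²} ds`, the odd part of `α` is `-γ T P(V / T)` with
`P x = (1/2 + x²) ∫₀ˣ e^{-s²} ds + x e^{-x²} / 2`. Expanding the Gaussian to first order gives
`|P x - x| ≤ 2 |x|³`, hence `|α(V) - α(-V) + γ V| ≤ 2 γ |V|³ / T² = |V|³ / ((μ + 1) D)`,
which tends to `0` uniformly for `V` in a bounded set.
-/

lemma integrable_exp_neg_sq : Integrable fun s : ℝ => exp (-s ^ 2) := by
  simpa using integrable_exp_neg_mul_sq one_pos

lemma abs_exp_neg_sq_sub_one_le (s : ℝ) : |exp (-s ^ 2) - 1| ≤ s ^ 2 := by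
  rw [abs_sub_comm, abs_of_nonneg (sub_nonneg.2 (exp_le_one_iff.2 (by nlinarith)))]
  linarith [one_sub_le_exp_neg (s ^ 2)]

lemma erfc_neg_sub_erfc (x : ℝ) :
    erfc (-x) - erfc x = 4 / √π * ∫ s in (0 : ℝ)..x, exp (-s ^ 2) := by
  have hint : ∀ a b : ℝ, IntervalIntegrable (fun s : ℝ => exp (-s ^ 2)) volume a b :=
    fun a b => integrable_exp_neg_sq.intervalIntegrable
  have hsymm : ∫ s in (-x)..0, exp (-s ^ 2) = ∫ s in (0 : ℝ)..x, exp (-s ^ 2) := by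
    have h := intervalIntegral.integral_comp_neg (a := 0) (b := x) fun s : ℝ => exp (-s ^ 2)
    simp only [neg_sq, neg_zero] at h
    exact h.symm
  have hsub := intervalIntegral.integral_Ioi_sub_Ioi' (μ := volume) (a := -x) (b := x)
    integrable_exp_neg_sq.integrableOn integrable_exp_neg_sq.integrableOn
  rw [← intervalIntegral.integral_add_adjacent_intervals (hint (-x) 0) (hint 0 x), hsymm] at hsub
  unfold erfc
  linear_combination 2 / √π * hsub

lemma abs_integral_exp_neg_sq_le (t : ℝ) : |∫ s in (0 : ℝ)..t, exp (-s ^ 2)| ≤ |t| := by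
  have hbound : ∀ s ∈ Set.uIoc 0 t, ‖exp (-s ^ 2)‖ ≤ 1 := fun s _ => by
    rw [norm_of_nonneg (exp_pos _).le, exp_le_one_iff]
    nlinarith
  simpa using intervalIntegral.norm_integral_le_of_norm_le_const hbound

lemma abs_integral_exp_neg_sq_sub_le (t : ℝ) :
    |(∫ s in (0 : ℝ)..t, exp (-s ^ 2)) - t| ≤ |t| ^ 3 := by
  have hsub :
      (∫ s in (0 : ℝ)..t, exp (-s ^ 2)) - t = ∫ s in (0 : ℝ)..t, (exp (-s ^ 2) - 1) := by
    simp [intervalIntegral.integral_sub integrable_exp_neg_sq.intervalIntegrable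
      intervalIntegrable_const]
  have hbound : ∀ s ∈ Set.uIoc 0 t, ‖exp (-s ^ 2) - 1‖ ≤ t ^ 2 := fun s hs => by
    refine (abs_exp_neg_sq_sub_one_le s).trans (sq_le_sq.2 ?_)
    rcases le_total 0 t with h | h
    · rw [Set.uIoc_of_le h] at hs
      rw [abs_of_pos hs.1, abs_of_nonneg h]; exact hs.2
    · rw [Set.uIoc_of_ge h] at hs
      rw [abs_of_nonpos hs.2, abs_of_nonpos h]; linarith [hs.1]
  rw [hsub]
  simpa [pow_succ, sq_abs] using intervalIntegral.norm_integral_le_of_norm_le_const hbound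

noncomputable def oddDriftProfile (x : ℝ) : ℝ :=
  (1 / 2 + x ^ 2) * (∫ s in (0 : ℝ)..x, exp (-s ^ 2)) + x * exp (-x ^ 2) / 2

lemma abs_oddDriftProfile_sub_le (x : ℝ) : |oddDriftProfile x - x| ≤ 2 * |x| ^ 3 := by
  set G := ∫ s in (0 : ℝ)..x, exp (-s ^ 2)
  have hG := abs_integral_exp_neg_sq_le x
  have hGx := abs_integral_exp_neg_sq_sub_le x
  have hE := abs_exp_neg_sq_sub_one_le x
  have hsplit : oddDriftProfile x - x = (G - x) / 2 + x ^ 2 * G + x * (exp (-x ^ 2) - 1) / 2 := by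
    unfold oddDriftProfile; ring
  calc |oddDriftProfile x - x|
      ≤ |G - x| / 2 + x ^ 2 * |G| + |x| * |exp (-x ^ 2) - 1| / 2 := by
        rw [hsplit]
        refine (abs_add_le _ _).trans (add_le_add ((abs_add_le _ _).trans (le_of_eq ?_)) ?_)
        · rw [abs_div, abs_mul, abs_two, abs_sq]
        · rw [abs_div, abs_mul, abs_two]
    _ ≤ |x| ^ 3 / 2 + x ^ 2 * |x| + |x| * x ^ 2 / 2 := by gcongr
    _ = 2 * |x| ^ 3 := by rw [← sq_abs]; ring

lemma alpha_sub_alpha_neg {γ D μ T : ℝ} (hγ : 0 < γ) (hD : 0 < D) (hT : 0 < T)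
    (hT2 : T ^ 2 = 2 * ((μ + 1) * D * γ)) (V : ℝ) :
    alpha γ D μ V - alpha γ D μ (-V) = -γ * T * oddDriftProfile (V / T) := by
  have hμ : 0 < μ + 1 := by nlinarith [mul_pos hD hγ]
  have hsqrt2 : 0 < √2 := by positivity
  have hσ : √((μ + 1) * D * γ) = T / √2 := by
    rw [eq_div_iff hsqrt2.ne', ← sqrt_mul (by positivity),
      sqrt_eq_iff_mul_self_eq (by positivity) hT.le]
    linear_combination -hT2
  have hlam : √(π * (μ + 1) * γ / (2 * D)) = (μ + 1) * γ * √π / T := by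
    rw [eq_div_iff hT.ne', ← sqrt_sq hT.le, ← sqrt_mul (by positivity),
      ← sqrt_sq (by positivity : 0 ≤ (μ + 1) * γ), ← sqrt_mul (by positivity), hT2]
    congr 1
    field_simp
  have hexp : -V ^ 2 / (2 * (T / √2) ^ 2) = -(V / T) ^ 2 := by
    rw [div_pow, sq_sqrt zero_le_two]; field_simp
  have herfc := erfc_neg_sub_erfc (V / T)
  simp only [alpha, hσ, hlam, div_mul_cancel₀ T hsqrt2.ne', hexp, neg_sq, neg_div, neg_neg,
    sqrt_div zero_le_two π]
  unfold oddDriftProfile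
  rw [div_pow, sq_sqrt zero_le_two]
  linear_combination (norm := skip) (-(γ * √π * (T ^ 2 / 2 + V ^ 2)) / (4 * T)) * herfc
  field_simp
  ring

lemma abs_alpha_sub_alpha_neg_add_mul_le {γ D μ : ℝ} (hγ : 0 < γ) (hD : 0 < D) (hμ : -1 < μ)
    (V : ℝ) : |alpha γ D μ V - alpha γ D μ (-V) - -γ * V| ≤ |V| ^ 3 / ((μ + 1) * D) := by
  have hμ' : 0 < μ + 1 := by linarith
  set T := √(2 * ((μ + 1) * D * γ))
  have hT : 0 < T := sqrt_pos.2 (by positivity)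
  have hT2 : T ^ 2 = 2 * ((μ + 1) * D * γ) := sq_sqrt (by positivity)
  have hV : -γ * V = -γ * T * (V / T) := by field_simp
  rw [alpha_sub_alpha_neg hγ hD hT hT2, hV, ← mul_sub, abs_mul, neg_mul, abs_neg,
    abs_of_pos (by positivity)]
  calc γ * T * |oddDriftProfile (V / T) - V / T|
      ≤ γ * T * (2 * |V / T| ^ 3) := by
        gcongr; exact abs_oddDriftProfile_sub_le (V / T)
    _ = |V| ^ 3 / ((μ + 1) * D) := by
      rw [abs_div, abs_of_pos hT]
      field_simp
      rw [hT2]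
      ring

/-- As `μ → ∞`, the total drift `α(V) - α(-V)` converges to `-γV`
uniformly for `V` in compact sets. -/
theorem stmt_9 (γ D : ℝ) (hγ : 0 < γ) (hD : 0 < D) (K : Set ℝ) (hK : IsCompact K) :
    TendstoUniformlyOn (fun (μ : ℝ) (V : ℝ) => alpha γ D μ V - alpha γ D μ (-V))
      (fun V => -γ * V) atTop K := by
  obtain ⟨M, hM⟩ := hK.isBounded.exists_norm_le
  have hbound : Tendsto (fun μ : ℝ => M ^ 3 / ((μ + 1) * D)) atTop (nhds 0) :=
    tendsto_const_nhds.div_atTop <|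
      (tendsto_atTop_add_const_right _ 1 tendsto_id).atTop_mul_const hD
  rw [Metric.tendstoUniformlyOn_iff]
  intro ε hε
  filter_upwards [hbound.eventually_lt_const hε, eventually_gt_atTop (-1)] with μ hμε hμ V hV
  have hμ' : 0 < (μ + 1) * D := mul_pos (by linarith) hD
  rw [dist_comm, dist_eq]
  calc |alpha γ D μ V - alpha γ D μ (-V) - -γ * V|
      ≤ |V| ^ 3 / ((μ + 1) * D) := abs_alpha_sub_alpha_neg_add_mul_le hγ hD hμ V
    _ ≤ M ^ 3 / ((μ + 1) * D) := by gcongr; exact hM V hV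
    _ < ε := hμε
end
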